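/- Suppose g ∈ F_{q^r}[x] is Galois coprime, g_0 ∈ F_q[x], and g_0·g divides x^n − 1. Then for every 0 ≤ w ≤ n, the number of codewords of F_q-weight w in the cyclic code C_{g_0 g} ⊆ (F_{q^r})^n equals q^{n − r·deg g − deg g_0} multiplied by the number of words of Hamming weight n − w in the cyclic code of length n over F_{q^{r−1}} with generator polynomial g_0. -/

import Mathlib

open Polynomial

/-- Coefficientwise application of `x ↦ x^(q^i)` (the `i`-th power of the Frobenius
`σ : x ↦ x^q`) to a polynomial. -/
noncomputable def polyGal {F : Type*} [Field F] (q i : ℕ) (g : Polynomial F) : Polynomial F :=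
  ∑ j ∈ g.support, Polynomial.C ((g.coeff j) ^ (q ^ i)) * Polynomial.X ^ j

/-- `g ∈ F_{q^r}[x]` is Galois coprime: `gcd(g, g^τ) = 1` for every non-trivial
`τ ∈ Gal(F_{q^r}/F_q)`, the non-trivial automorphisms being `x ↦ x^(q^i)`, `1 ≤ i < r`. -/
def GaloisCoprime {F : Type*} [Field F] (q r : ℕ) (g : Polynomial F) : Prop :=
  ∀ i : ℕ, 0 < i → i < r → IsCoprime g (polyGal q i g)

/-- The polynomial of degree `< n` whose coefficient vector is the word `u`. -/
noncomputable def wordPoly {F : Type*} [Field F] {n : ℕ} (u : Fin n → F) : Polynomial F :=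
  ∑ j : Fin n, Polynomial.C (u j) * Polynomial.X ^ (j : ℕ)

/-- The `F_q`-weight of a word: the number of coordinates lying in the subfield `F_q`,
i.e. the set of roots of `x^q = x`. -/
noncomputable def fqWeight {F : Type*} [Field F] {n : ℕ} (q : ℕ) (u : Fin n → F) : ℕ :=
  Set.ncard {j : Fin n | (u j) ^ q = u j}

/-- The Hamming weight of a word: the number of nonzero coordinates. -/
noncomputable def hammingWt {F : Type*} [Field F] {n : ℕ} (u : Fin n → F) : ℕ :=
  Set.ncard {j : Fin n | u j ≠ 0}

/-! The map `Θ : u ↦ (u_j^q - u_j)_j` is `F_q`-linear, and `u_j ∈ F_q` exactly when `Θ(u)_j = 0`,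
so `wt_{F_q}(u) = n - wt(Θ u)`. On the code `C = C_{g₀ g}` the kernel of `Θ` consists of the
`F_q`-rational codewords. Such a codeword is fixed by the Frobenius `σ`, so it is divisible by
every conjugate `g^{σ^i}`; these are pairwise coprime because `g` is Galois coprime, hence the
rational codewords are the codewords of the code over `F_q` generated by `g₀ · N(g)`, where
`N(g) = ∏_{i<r} g^{σ^i}`, and there are `q^(n - deg g₀ - r deg g)` of them. The image `Θ(C)` lies
in the words that are divisible by `g₀` and have coordinates in the image of `x ↦ x^q - x`, an
`F_q`-space of dimension `r - 1`. Divisibility by `g₀ ∈ F_q[x]` is an `F_q`-linear condition on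
the coordinates, so identifying that space with `F_{q^{r-1}}` turns these words into the code of
`g₀` over `F_{q^{r-1}}`, and counting shows that `Θ(C)` is all of it. Each fibre of `Θ` on `C` is
a coset of the kernel, which gives the formula. -/

section WordPoly

variable {F : Type*} [Field F] {n : ℕ}

theorem wordPoly_eq_degreeLTEquiv_symm (u : Fin n → F) :
    wordPoly u = ((degreeLTEquiv F n).symm u : F[X]) := by
  rw [← (Module.Basis.equivFun_ofEquivFun _ : (degreeLT.basis F n).equivFun = _),
    Module.Basis.equivFun_symm_apply, Submodule.coe_sum]
  exact Finset.sum_congr rfl fun j _ => by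
    rw [Submodule.coe_smul, smul_eq_C_mul]; exact congrArg _ (degreeLT.basis_val j).symm

theorem degree_wordPoly_lt (u : Fin n → F) : (wordPoly u).degree < n := by
  rw [wordPoly_eq_degreeLTEquiv_symm, ← mem_degreeLT]
  exact Submodule.coe_mem _

theorem wordPoly_coeff_eq {f : F[X]} (hf : f.degree < n) :
    wordPoly (fun j : Fin n => f.coeff j) = f := by
  rw [wordPoly_eq_degreeLTEquiv_symm]
  exact congrArg Subtype.val ((degreeLTEquiv F n).symm_apply_apply ⟨f, mem_degreeLT.2 hf⟩)

theorem wordPoly_injective : Function.Injective (wordPoly (F := F) (n := n)) := by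
  intro u v h
  rw [wordPoly_eq_degreeLTEquiv_symm, wordPoly_eq_degreeLTEquiv_symm] at h
  exact (degreeLTEquiv F n).symm.injective (Subtype.ext h)

theorem wordPoly_add (u v : Fin n → F) : wordPoly (u + v) = wordPoly u + wordPoly v := by
  simp only [wordPoly_eq_degreeLTEquiv_symm, map_add, Submodule.coe_add]

theorem wordPoly_sub (u v : Fin n → F) : wordPoly (u - v) = wordPoly u - wordPoly v := by
  simp only [wordPoly_eq_degreeLTEquiv_symm, map_sub, Submodule.coe_sub]

theorem wordPoly_smul (c : F) (u : Fin n → F) : wordPoly (c • u) = c • wordPoly u := by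
  simp only [wordPoly_eq_degreeLTEquiv_symm, map_smul, Submodule.coe_smul]

theorem map_wordPoly {L : Type*} [Field L] (f : F →+* L) (u : Fin n → F) :
    (wordPoly u).map f = wordPoly (f ∘ u) := by
  simp only [wordPoly, Polynomial.map_sum, Polynomial.map_mul, map_C, Polynomial.map_pow, map_X,
    Function.comp_apply]

theorem fqWeight_eq_iff {w : ℕ} (hw : w ≤ n) (q : ℕ) (u : Fin n → F) :
    fqWeight q u = w ↔ hammingWt (fun j => u j ^ q - u j) = n - w := by
  have hcompl : {j | u j ^ q - u j ≠ 0} = {j | u j ^ q = u j}ᶜ := by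
    ext j
    exact sub_ne_zero
  have := Set.ncard_add_ncard_compl {j | u j ^ q = u j}
  rw [← hcompl, Nat.card_fin] at this
  rw [fqWeight, hammingWt]
  omega

theorem image_comp_inter_setOf_hammingWt {L : Type*} [Field L] {e : F → L}
    (he : ∀ x, e x = 0 ↔ x = 0) (B : Set (Fin n → F)) (k : ℕ) :
    (e ∘ ·) '' B ∩ {v | hammingWt v = k} = (e ∘ ·) '' {v | v ∈ B ∧ hammingWt v = k} := by
  have hwt (v : Fin n → F) : hammingWt (e ∘ v) = hammingWt v := by
    simp only [hammingWt, Function.comp_apply, ne_eq, he]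
  rw [← Set.image_inter_preimage]
  congr 1
  ext v
  exact and_congr_right' (by rw [Set.mem_preimage, Set.mem_ofPred_eq, hwt])

def codeOf (h : F[X]) (n : ℕ) : Submodule F (Fin n → F) where
  carrier := {u | h ∣ wordPoly u}
  add_mem' {u v} hu hv := show h ∣ wordPoly (u + v) by rw [wordPoly_add]; exact dvd_add hu hv
  zero_mem' := show h ∣ wordPoly 0 by simp [wordPoly]
  smul_mem' c u hu := show h ∣ wordPoly (c • u) by
    rw [wordPoly_smul, smul_eq_C_mul]; exact dvd_mul_of_dvd_right hu _

@[simp]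
theorem mem_codeOf {h : F[X]} {u : Fin n → F} : u ∈ codeOf h n ↔ h ∣ wordPoly u := Iff.rfl

end WordPoly

section Counting

variable {n : ℕ}

theorem ncard_codeOf {L : Type*} [Field L] [Fintype L] {h : L[X]} (hh : h.Monic)
    (hn : h.natDegree ≤ n) :
    (codeOf h n : Set (Fin n → L)).ncard = Fintype.card L ^ (n - h.natDegree) := by
  have hdeg (s : L[X]) : (h * s).degree < n ↔ s.degree < (n - h.natDegree : ℕ) := by
    rcases eq_or_ne s 0 with rfl | hs
    · simp
    rw [← natDegree_lt_iff_degree_lt (mul_ne_zero hh.ne_zero hs), ← natDegree_lt_iff_degree_lt hs,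
      hh.natDegree_mul' hs]
    omega
  set e : (Fin (n - h.natDegree) → L) → Fin n → L := fun t j => (h * wordPoly t).coeff j
  have he (t) : wordPoly (e t) = h * wordPoly t :=
    wordPoly_coeff_eq ((hdeg _).2 (degree_wordPoly_lt t))
  have hrange : (codeOf h n : Set (Fin n → L)) = Set.range e := by
    ext u
    constructor
    · rintro ⟨s, hs⟩
      refine ⟨fun j => s.coeff j, wordPoly_injective ?_⟩
      rw [he, wordPoly_coeff_eq ((hdeg s).1 (hs ▸ degree_wordPoly_lt u)), hs]
    · rintro ⟨t, rfl⟩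
      exact ⟨_, he t⟩
  have he_inj : Function.Injective e := fun t t' htt' =>
    wordPoly_injective (mul_left_cancel₀ hh.ne_zero (by rw [← he, ← he, htt']))
  rw [hrange, Set.ncard_range_of_injective he_inj, Nat.card_eq_fintype_card, Fintype.card_fun,
    Fintype.card_fin]

variable {K : Type*} [Field K] {g₀ : K[X]}

theorem map_dvd_wordPoly_iff {L : Type*} [Field L] [Algebra K L] (hg₀ : g₀.Monic)
    (u : Fin n → L) : g₀.map (algebraMap K L) ∣ wordPoly u ↔
      ∀ m, ∑ j : Fin n, (X ^ (j : ℕ) %ₘ g₀).coeff m • u j = 0 := by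
  have hmod : wordPoly u %ₘ g₀.map (algebraMap K L) =
      ∑ j, C (u j) * (X ^ (j : ℕ) %ₘ g₀).map (algebraMap K L) := by
    rw [wordPoly, ← modByMonicHom_apply, map_sum]
    refine Finset.sum_congr rfl fun j _ => ?_
    rw [modByMonicHom_apply, ← smul_eq_C_mul, smul_modByMonic, map_modByMonic _ hg₀, smul_eq_C_mul,
      Polynomial.map_pow, map_X]
  rw [← modByMonic_eq_zero_iff_dvd (hg₀.map _), hmod, Polynomial.ext_iff]
  refine forall_congr' fun m => ?_
  simp only [finsetSum_coeff, coeff_C_mul, coeff_map, coeff_zero, Algebra.smul_def, mul_comm (u _)]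

theorem map_dvd_wordPoly_comp_iff {L L' : Type*} [Field L] [Field L'] [Algebra K L]
    [Algebra K L'] (hg₀ : g₀.Monic) {e : L →ₗ[K] L'} (he : Function.Injective e)
    (u : Fin n → L) :
    g₀.map (algebraMap K L') ∣ wordPoly (e ∘ u) ↔ g₀.map (algebraMap K L) ∣ wordPoly u := by
  simp only [map_dvd_wordPoly_iff hg₀, Function.comp_apply, ← map_smul, ← map_sum,
    map_eq_zero_iff e he]

theorem ncard_codeOf_map_of_mem_range {L : Type*} [Field L] [Algebra K L] (hg₀ : g₀.Monic) :
    {u | u ∈ codeOf (g₀.map (algebraMap K L)) n ∧ ∀ j, u j ∈ Set.range (algebraMap K L)}.ncard =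
      (codeOf g₀ n : Set (Fin n → K)).ncard := by
  rw [← Set.ncard_image_of_injective _ (algebraMap K L).injective.comp_left]
  congr 1
  ext u
  constructor
  · rintro ⟨hdvd, hu⟩
    choose t ht using hu
    obtain rfl : algebraMap K L ∘ t = u := funext ht
    rw [mem_codeOf, ← map_wordPoly, map_dvd_map _ (algebraMap K L).injective hg₀] at hdvd
    exact ⟨t, hdvd, rfl⟩
  · rintro ⟨t, ht, rfl⟩
    rw [Set.mem_ofPred_eq, mem_codeOf, ← map_wordPoly, map_dvd_map _ (algebraMap K L).injective hg₀]
    exact ⟨ht, fun j => ⟨t j, rfl⟩⟩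

end Counting

section Fibers

theorem Set.ncard_eq_ncard_mul_of_fibers {α β : Type*} [Finite α] [Finite β] {S : Set α}
    {T : Set β} {f : α → β} (hf : Set.MapsTo f S T) {c : ℕ}
    (hfib : ∀ v ∈ T, {u | u ∈ S ∧ f u = v}.ncard = c) : S.ncard = T.ncard * c := by
  classical
  have := Fintype.ofFinite α
  have := Fintype.ofFinite β
  rw [Set.ncard_eq_toFinset_card' S, Set.ncard_eq_toFinset_card' T,
    Finset.card_eq_sum_card_fiberwise (t := T.toFinset) fun u hu =>
      Set.mem_toFinset.2 (hf (Set.mem_toFinset.1 hu)),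
    Finset.sum_const_nat fun v hv => ?_]
  rw [← hfib v (Set.mem_toFinset.1 hv), Set.ncard_eq_toFinset_card']
  congr 1
  ext u
  simp

variable {V W : Type*} [AddGroup V] [AddGroup W] (θ : V →+ W) (C : AddSubgroup V)

theorem AddMonoidHom.ncard_fiber_eq_ncard_ker {u₀ : V} (hu₀ : u₀ ∈ C) :
    {u | u ∈ C ∧ θ u = θ u₀}.ncard = {u | u ∈ C ∧ θ u = 0}.ncard := by
  have : {u | u ∈ C ∧ θ u = θ u₀} = (· + u₀) '' {u | u ∈ C ∧ θ u = 0} := by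
    ext u
    refine ⟨fun ⟨hu, hθ⟩ => ⟨u - u₀, ⟨C.sub_mem hu hu₀, by simp [hθ]⟩, sub_add_cancel u u₀⟩, ?_⟩
    rintro ⟨z, ⟨hz, hθ⟩, rfl⟩
    exact ⟨C.add_mem hz hu₀, by simp [hθ]⟩
  rw [this, Set.ncard_image_of_injective _ (add_left_injective u₀)]

theorem AddMonoidHom.ncard_preimage_inter [Finite V] [Finite W] {S : Set W} (hS : S ⊆ θ '' C) :
    {u | u ∈ C ∧ θ u ∈ S}.ncard = S.ncard * {u | u ∈ C ∧ θ u = 0}.ncard := by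
  refine Set.ncard_eq_ncard_mul_of_fibers (fun u hu => hu.2) fun v hv => ?_
  obtain ⟨u₀, hu₀, rfl⟩ := hS hv
  rw [← θ.ncard_fiber_eq_ncard_ker C hu₀]
  congr 1
  ext u
  exact ⟨fun ⟨⟨hu, _⟩, hθ⟩ => ⟨hu, hθ⟩, fun ⟨hu, hθ⟩ => ⟨⟨hu, hθ ▸ hv⟩, hθ⟩⟩

theorem AddMonoidHom.image_eq_of_ncard_le [Finite V] [Finite W] {A : Set W}
    (hA : Set.MapsTo θ C A)
    (hcard : A.ncard * {u | u ∈ C ∧ θ u = 0}.ncard ≤ (C : Set V).ncard) : θ '' C = A := by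
  have hC : (C : Set V).ncard = (θ '' C).ncard * {u | u ∈ C ∧ θ u = 0}.ncard := by
    rw [← θ.ncard_preimage_inter C subset_rfl]
    congr 1
    ext u
    exact ⟨fun hu => ⟨hu, u, hu, rfl⟩, And.left⟩
  have hker : 0 < {u | u ∈ C ∧ θ u = 0}.ncard :=
    (Set.ncard_pos (Set.toFinite _)).2 ⟨0, C.zero_mem, θ.map_zero⟩
  refine Set.eq_of_subset_of_ncard_le (Set.image_subset_iff.2 hA) ?_ (Set.toFinite A)
  exact Nat.le_of_mul_le_mul_right (hcard.trans hC.le) hker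

end Fibers

section Conjugates

variable {F : Type*} [Field F] (σ : F →+* F)

theorem Polynomial.map_pow_eq_self {f : F[X]} (hf : f.map σ = f) (i : ℕ) :
    f.map (σ ^ i) = f := by
  induction i with
  | zero => exact map_id
  | succ i ih => rw [pow_succ, RingHom.mul_def, ← map_map, hf, ih]

theorem Polynomial.map_map_pow (g : F[X]) (i j : ℕ) :
    (g.map (σ ^ j)).map (σ ^ i) = g.map (σ ^ (i + j)) := by
  rw [map_map, ← RingHom.mul_def, pow_add]

theorem polyGal_eq_map {q i : ℕ} (g : F[X]) {τ : F →+* F} (hτ : ∀ x, τ x = x ^ q ^ i) :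
    polyGal q i g = g.map τ := by
  conv_rhs => rw [g.as_sum_support_C_mul_X_pow]
  simp only [polyGal, Polynomial.map_sum, Polynomial.map_mul, map_C, Polynomial.map_pow, map_X, hτ]

/-- For the Frobenius of `F_{q^r}` over `F_q`, `conjProd σ r g` is the norm of `g`. -/
noncomputable def conjProd (r : ℕ) (g : F[X]) : F[X] := ∏ i ∈ Finset.range r, g.map (σ ^ i)

variable (g : F[X]) {r : ℕ}

theorem map_conjProd (hσ : σ ^ r = 1) : (conjProd σ r g).map σ = conjProd σ r g := by
  have hshift (i : ℕ) : (g.map (σ ^ i)).map σ = g.map (σ ^ (i + 1)) := by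
    simpa [add_comm] using map_map_pow σ g 1 i
  obtain _ | m := r
  · simp [conjProd]
  rw [conjProd, Polynomial.map_prod, Finset.prod_congr rfl fun i _ => hshift i,
    Finset.prod_range_succ, hσ, Finset.prod_range_succ', pow_zero]

theorem monic_conjProd {g : F[X]} (hg : g.Monic) : (conjProd σ r g).Monic :=
  monic_prod_of_monic _ _ fun _ _ => hg.map _

theorem natDegree_conjProd {g : F[X]} (hg : g.Monic) :
    (conjProd σ r g).natDegree = r * g.natDegree := by
  rw [conjProd, natDegree_prod_of_monic _ _ fun _ _ => hg.map _]
  simp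

theorem pairwise_isCoprime_map_pow (hg : ∀ i, 0 < i → i < r → IsCoprime g (g.map (σ ^ i))) :
    (Finset.range r : Set ℕ).Pairwise (Function.onFun IsCoprime fun i => g.map (σ ^ i)) := by
  intro i hi j hj hij
  wlog hlt : i < j generalizing i j
  · exact (this hj hi hij.symm (by omega)).symm
  simp only [Finset.coe_range, Set.mem_Iio] at hj
  have := (hg (j - i) (by omega) (by omega)).map (mapRingHom (σ ^ i))
  rwa [coe_mapRingHom, map_map_pow, Nat.add_sub_cancel' hlt.le] at this

theorem dvd_iff_conjProd_dvd (hr : 0 < r)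
    (hg : ∀ i, 0 < i → i < r → IsCoprime g (g.map (σ ^ i))) {f : F[X]} (hf : f.map σ = f) :
    g ∣ f ↔ conjProd σ r g ∣ f := by
  constructor
  · intro h
    refine Finset.prod_dvd_of_coprime (pairwise_isCoprime_map_pow σ g hg) fun i _ => ?_
    simpa [map_pow_eq_self σ hf] using map_dvd (σ ^ i) h
  · intro h
    simpa [RingHom.one_def] using
      (Finset.dvd_prod_of_mem (fun i => g.map (σ ^ i)) (Finset.mem_range.2 hr)).trans h

theorem isCoprime_conjProd {a : F[X]} (ha : a.map σ = a) (hag : IsCoprime a g) :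
    IsCoprime a (conjProd σ r g) :=
  IsCoprime.prod_right fun i _ => by
    simpa [map_pow_eq_self σ ha] using hag.map (mapRingHom (σ ^ i))

end Conjugates

section Frobenius

open FiniteField Module

variable (K : Type*) {F : Type*} [Field K] [Fintype K] [Field F] [Algebra K F]

theorem pow_card_eq_self_iff_mem_range {x : F} :
    x ^ Fintype.card K = x ↔ x ∈ Set.range (algebraMap K F) := by
  refine ⟨fun hx => ?_, ?_⟩
  · have hsplit : (X ^ Fintype.card K - X : K[X]).Splits := by
      rw [splits_iff_card_roots, roots_X_pow_card_sub_X,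
        X_pow_card_sub_X_natDegree_eq K Fintype.one_lt_card]
      rfl
    exact hsplit.mem_range_of_isRoot (X_pow_card_sub_X_ne_zero K Fintype.one_lt_card)
      (by simp [hx])
  · rintro ⟨c, rfl⟩
    rw [← map_pow, pow_card]

theorem frobenius_pow_apply (i : ℕ) (x : F) :
    ((frobeniusAlgHom K F : F →+* F) ^ i) x = x ^ Fintype.card K ^ i := by
  rw [RingHom.coe_pow]
  exact congrFun (pow_iterate _ i) x

theorem frobenius_pow_finrank [Fintype F] :
    (frobeniusAlgHom K F : F →+* F) ^ finrank K F = 1 := by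
  ext x
  rw [frobenius_pow_apply, ← card_eq_pow_finrank, pow_card]
  rfl

theorem map_frobenius_map_algebraMap (f : K[X]) :
    (f.map (algebraMap K F)).map (frobeniusAlgHom K F : F →+* F) = f.map (algebraMap K F) := by
  rw [map_map, AlgHom.comp_algebraMap]

theorem mem_lifts_of_map_frobenius_eq {Q : F[X]}
    (hQ : Q.map (frobeniusAlgHom K F : F →+* F) = Q) : Q ∈ lifts (algebraMap K F) := by
  rw [lifts_iff_coeff_lifts]
  intro m
  rw [← pow_card_eq_self_iff_mem_range]
  simpa using congrArg (coeff · m) hQ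

theorem finrank_eq_of_card_eq_pow {V : Type*} [AddCommGroup V] [Module K V] [Fintype V] {r : ℕ}
    (h : Fintype.card V = Fintype.card K ^ r) : finrank K V = r :=
  Nat.pow_right_injective Fintype.one_lt_card (card_eq_pow_finrank.symm.trans h)

theorem separable_X_pow_sub_one_of_coprime {n : ℕ} (hn : n.Coprime (Fintype.card K)) :
    (X ^ n - 1 : F[X]).Separable := by
  have hnK : (n : K) ≠ 0 := by
    rw [Ne, CharP.cast_eq_zero_iff K (ringChar K)]
    intro hchar
    have hcard := (CharP.cast_eq_zero_iff K (ringChar K) _).1 (cast_card_eq_zero K)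
    exact CharP.ringChar_ne_one (Nat.eq_one_of_dvd_coprimes hn hchar hcard)
  simpa using separable_X_pow_sub_C (1 : F)
    (by rwa [← map_natCast (algebraMap K F), _root_.map_ne_zero]) one_ne_zero

variable (F) in
def frobeniusSubId : F →ₗ[K] F := (frobeniusAlgHom K F).toLinearMap - LinearMap.id

theorem frobeniusSubId_apply (x : F) : frobeniusSubId K F x = x ^ Fintype.card K - x := rfl

theorem compLeft_frobeniusSubId_eq_zero_iff {n : ℕ} (u : Fin n → F) :
    (frobeniusSubId K F).compLeft (Fin n) u = 0 ↔ ∀ j, u j ∈ Set.range (algebraMap K F) := by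
  simp only [funext_iff, LinearMap.compLeft_apply, Function.comp_apply, Pi.zero_apply,
    frobeniusSubId_apply, sub_eq_zero, pow_card_eq_self_iff_mem_range]

theorem finrank_range_frobeniusSubId [FiniteDimensional K F] :
    finrank K (LinearMap.range (frobeniusSubId K F)) = finrank K F - 1 := by
  have hker : LinearMap.ker (frobeniusSubId K F) = Subalgebra.toSubmodule ⊥ := by
    ext x
    rw [LinearMap.mem_ker, frobeniusSubId_apply, sub_eq_zero, pow_card_eq_self_iff_mem_range,
      Subalgebra.mem_toSubmodule, Algebra.mem_bot]
  have := LinearMap.finrank_range_add_finrank_ker (frobeniusSubId K F)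
  rw [hker, Subalgebra.finrank_toSubmodule, Subalgebra.finrank_bot] at this
  omega

theorem exists_injective_range_eq_frobeniusSubId (E : Type*) [Field E] [Algebra K E]
    [FiniteDimensional K E] [FiniteDimensional K F] (h : finrank K E = finrank K F - 1) :
    ∃ e : E →ₗ[K] F, Function.Injective e ∧
      LinearMap.range e = LinearMap.range (frobeniusSubId K F) := by
  let ψ := LinearEquiv.ofFinrankEq E (LinearMap.range (frobeniusSubId K F))
    (h.trans (finrank_range_frobeniusSubId K).symm)
  refine ⟨(LinearMap.range _).subtype ∘ₗ ψ.toLinearMap, Subtype.val_injective.comp ψ.injective, ?_⟩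
  rw [LinearMap.range_comp, LinearEquiv.range, Submodule.map_top, Submodule.range_subtype]

end Frobenius

section Descent

open FiniteField Module

variable {K F : Type*} [Field K] [Fintype K] [Field F] [Algebra K F] {n : ℕ}
  {g : F[X]} {g₀ : K[X]}

local notation "σ" => (frobeniusAlgHom K F : F →+* F)

local notation "Θ" => LinearMap.compLeft (frobeniusSubId K F) (Fin n)

theorem GaloisCoprime.isCoprime_map_frobenius_pow
    (hGC : GaloisCoprime (Fintype.card K) (finrank K F) g) {i : ℕ} (hi₀ : 0 < i)
    (hi : i < finrank K F) : IsCoprime g (g.map (σ ^ i)) := by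
  rw [← polyGal_eq_map g (frobenius_pow_apply K i)]
  exact hGC i hi₀ hi

variable [Fintype F]

theorem exists_lift_conjProd_frobenius (hg : g.Monic) :
    ∃ P : K[X], P.Monic ∧ P.natDegree = finrank K F * g.natDegree ∧
      P.map (algebraMap K F) = conjProd σ (finrank K F) g := by
  obtain ⟨P, hP⟩ := mem_lifts_of_map_frobenius_eq K (map_conjProd σ g (frobenius_pow_finrank K))
  rw [coe_mapRingHom] at hP
  refine ⟨P, (algebraMap K F).injective.monic_map_iff.2 (hP ▸ monic_conjProd σ hg), ?_, hP⟩
  rw [← natDegree_map (algebraMap K F), hP, natDegree_conjProd σ hg]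

section

variable (hGC : GaloisCoprime (Fintype.card K) (finrank K F) g)
  (hcop : IsCoprime (g₀.map (algebraMap K F)) g) {P : K[X]}
  (hP : P.map (algebraMap K F) = conjProd (frobeniusAlgHom K F) (finrank K F) g)
include hGC hcop hP

theorem map_mul_dvd_iff_of_map_frobenius_eq {f : F[X]} (hf : f.map σ = f) :
    g₀.map (algebraMap K F) * g ∣ f ↔ (g₀ * P).map (algebraMap K F) ∣ f := by
  have hdvd_iff {f : F[X]} (hf : f.map σ = f) : g ∣ f ↔ conjProd σ (finrank K F) g ∣ f :=
    dvd_iff_conjProd_dvd σ g finrank_pos (fun _ => hGC.isCoprime_map_frobenius_pow) hf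
  rw [Polynomial.map_mul, hP]
  constructor
  · intro h
    exact (isCoprime_conjProd σ g (map_frobenius_map_algebraMap K g₀) hcop).mul_dvd
      (dvd_of_mul_right_dvd h) ((hdvd_iff hf).1 (dvd_of_mul_left_dvd h))
  · exact (mul_dvd_mul_left _
      ((hdvd_iff (map_conjProd σ g (frobenius_pow_finrank K))).2 dvd_rfl)).trans

theorem ncard_codeOf_inter_ker_eq (hg₀ : g₀.Monic) (hP₀ : P.Monic) :
    {u | u ∈ codeOf (g₀.map (algebraMap K F) * g) n ∧ Θ u = 0}.ncard =
      (codeOf (g₀ * P) n : Set (Fin n → K)).ncard := by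
  simp only [compLeft_frobeniusSubId_eq_zero_iff]
  rw [← ncard_codeOf_map_of_mem_range (L := F) (hg₀.mul hP₀)]
  congr 1
  ext u
  refine and_congr_left fun hu => map_mul_dvd_iff_of_map_frobenius_eq hGC hcop hP ?_
  rw [map_wordPoly]
  congr 1
  funext j
  obtain ⟨c, hc⟩ := hu j
  rw [Function.comp_apply, ← hc]
  exact (frobeniusAlgHom K F).commutes c

end

variable (hg : g.Monic) (hg₀ : g₀.Monic) (hGC : GaloisCoprime (Fintype.card K) (finrank K F) g)
  (hsep : (X ^ n - 1 : F[X]).Separable) (hdvd : g₀.map (algebraMap K F) * g ∣ X ^ n - 1)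
include hg hg₀ hGC hsep hdvd

theorem natDegree_add_finrank_mul_le : g₀.natDegree + finrank K F * g.natDegree ≤ n := by
  obtain ⟨P, hP₀, hPdeg, hP⟩ := exists_lift_conjProd_frobenius (K := K) hg
  have h := (map_mul_dvd_iff_of_map_frobenius_eq hGC (hsep.of_dvd hdvd).isCoprime hP
    (by simp)).1 hdvd
  have := natDegree_le_of_dvd h hsep.ne_zero
  rwa [natDegree_map, natDegree_mul hg₀.ne_zero hP₀.ne_zero, hPdeg, ← C_1,
    natDegree_X_pow_sub_C] at this

theorem ncard_codeOf_inter_ker :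
    {u | u ∈ codeOf (g₀.map (algebraMap K F) * g) n ∧ Θ u = 0}.ncard =
      Fintype.card K ^ (n - (g₀.natDegree + finrank K F * g.natDegree)) := by
  obtain ⟨P, hP₀, hPdeg, hP⟩ := exists_lift_conjProd_frobenius (K := K) hg
  have hdeg : (g₀ * P).natDegree = g₀.natDegree + finrank K F * g.natDegree := by
    rw [natDegree_mul hg₀.ne_zero hP₀.ne_zero, hPdeg]
  rw [ncard_codeOf_inter_ker_eq hGC (hsep.of_dvd hdvd).isCoprime hP hg₀ hP₀,
    ncard_codeOf (hg₀.mul hP₀) (hdeg ▸ natDegree_add_finrank_mul_le hg hg₀ hGC hsep hdvd), hdeg]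

theorem image_compLeft_frobeniusSubId_codeOf {E : Type*} [Field E] [Fintype E] [Algebra K E]
    {e : E →ₗ[K] F} (he : Function.Injective e)
    (hrange : LinearMap.range e = LinearMap.range (frobeniusSubId K F)) :
    Θ '' codeOf (g₀.map (algebraMap K F) * g) n =
      (e ∘ ·) '' codeOf (g₀.map (algebraMap K E)) n := by
  set C := codeOf (g₀.map (algebraMap K F) * g) n
  refine (Θ).toAddMonoidHom.image_eq_of_ncard_le C.toAddSubgroup (fun u hu => ?_) (le_of_eq ?_)
  · have hmem (j : Fin n) : Θ u j ∈ LinearMap.range e := hrange ▸ LinearMap.mem_range_self _ _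
    choose v hv using hmem
    refine ⟨v, ?_, funext hv⟩
    have hΘ : wordPoly (Θ u) = (wordPoly u).map σ - wordPoly u := by
      rw [map_wordPoly, ← wordPoly_sub]
      rfl
    have hu : g₀.map (algebraMap K F) ∣ wordPoly u := dvd_of_mul_right_dvd hu
    rw [SetLike.mem_coe, mem_codeOf, ← map_dvd_wordPoly_comp_iff hg₀ he,
      show e ∘ v = Θ u from funext hv, hΘ]
    refine dvd_sub ?_ hu
    simpa [map_frobenius_map_algebraMap] using map_dvd σ hu
  · have hrE : finrank K E + 1 = finrank K F := by
      rw [← LinearMap.finrank_range_of_inj he, hrange, finrank_range_frobeniusSubId]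
      have : 0 < finrank K F := finrank_pos
      omega
    have hle := natDegree_add_finrank_mul_le hg hg₀ hGC hsep hdvd
    have ha : g.natDegree ≤ finrank K F * g.natDegree := Nat.le_mul_of_pos_left _ finrank_pos
    have hdeg : (g₀.map (algebraMap K F) * g).natDegree = g₀.natDegree + g.natDegree := by
      rw [natDegree_mul (hg₀.map _).ne_zero hg.ne_zero, natDegree_map]
    rw [Set.ncard_image_of_injective _ he.comp_left, Submodule.coe_toAddSubgroup,
      ncard_codeOf (hg₀.map _) (by rw [natDegree_map]; omega), natDegree_map,
      ncard_codeOf ((hg₀.map _).mul hg) (by omega), hdeg,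
      show {u | u ∈ C.toAddSubgroup ∧ (Θ).toAddMonoidHom u = 0} = {u | u ∈ C ∧ Θ u = 0} from rfl,
      ncard_codeOf_inter_ker hg hg₀ hGC hsep hdvd, card_eq_pow_finrank (K := K) (V := E),
      card_eq_pow_finrank (K := K) (V := F), ← pow_mul, ← pow_mul, ← pow_add]
    congr 1
    zify [hle, (by omega : g₀.natDegree ≤ n), (by omega : g₀.natDegree + g.natDegree ≤ n)]
    rw [← hrE]
    push_cast
    ring

end Descent

theorem stmt5_general (q r n : ℕ)
    (hcop : Nat.Coprime n q)
    (K : Type*) [Field K] [Fintype K] (hK : Fintype.card K = q)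
    (E : Type*) [Field E] [Fintype E] (hE : Fintype.card E = q ^ (r - 1))
    (F : Type*) [Field F] [Fintype F] (hF : Fintype.card F = q ^ r)
    (φ : K →+* F) (χ : K →+* E)
    (g : Polynomial F) (hmonic : g.Monic) (hGC : GaloisCoprime q r g)
    (g₀ : Polynomial K) (hmonic₀ : g₀.Monic)
    (hdvd : (g₀.map φ) * g ∣ (Polynomial.X ^ n - 1 : Polynomial F))
    (w : ℕ) (hw : w ≤ n) :
    {u : Fin n → F | (g₀.map φ) * g ∣ wordPoly u ∧ fqWeight q u = w}.ncard =
      q ^ (n - r * g.natDegree - g₀.natDegree) *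
        {v : Fin n → E | g₀.map χ ∣ wordPoly v ∧ hammingWt v = n - w}.ncard := by
  subst hK
  let := φ.toAlgebra
  let := χ.toAlgebra
  obtain rfl : Module.finrank K F = r := finrank_eq_of_card_eq_pow K hF
  obtain ⟨e, he, hrange⟩ :=
    exists_injective_range_eq_frobeniusSubId K E (finrank_eq_of_card_eq_pow K hE)
  have hsep := separable_X_pow_sub_one_of_coprime (F := F) K hcop
  set Θ := (frobeniusSubId K F).compLeft (Fin n)
  set C := codeOf (g₀.map φ * g) n
  have himage : Θ '' C = (e ∘ ·) '' codeOf (g₀.map χ) n :=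
    image_compLeft_frobeniusSubId_codeOf hmonic hmonic₀ hGC hsep hdvd he hrange
  calc _ = {u | u ∈ C.toAddSubgroup ∧ Θ u ∈ Θ '' C ∩ {v | hammingWt v = n - w}}.ncard := by
        congr 1
        ext u
        refine and_congr_right fun hu => (fqWeight_eq_iff hw _ u).trans ?_
        exact ⟨fun h => ⟨⟨u, hu, rfl⟩, h⟩, And.right⟩
    _ = (Θ '' C ∩ {v | hammingWt v = n - w}).ncard * {u | u ∈ C ∧ Θ u = 0}.ncard :=
        Θ.toAddMonoidHom.ncard_preimage_inter C.toAddSubgroup Set.inter_subset_left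
    _ = _ := by
        rw [himage, image_comp_inter_setOf_hammingWt fun x => map_eq_zero_iff e he,
          Set.ncard_image_of_injective _ he.comp_left, mul_comm, Nat.sub_sub, add_comm]
        exact congrArg (· * _) (ncard_codeOf_inter_ker hmonic hmonic₀ hGC hsep hdvd)

/-- `g ∈ F_{q^r}[x]` Galois coprime, `g₀ ∈ F_q[x]`, `g₀·g ∣ x^n − 1`.  Then the
number of codewords of `F_q`-weight `w` in `C_{g₀g} ⊆ (F_{q^r})^n` equals
`q^(n − r·deg g − deg g₀)` times the number of words of Hamming weight `n − w` in the cyclic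
code of length `n` over `F_{q^{r−1}}` with generator polynomial `g₀`.  Here `K` plays the
role of `F_q`, `E` of `F_{q^{r−1}}` and `F` of `F_{q^r}`, with `φ : K → F` and `χ : K → E`
the field embeddings. -/
theorem stmt5 (q r n : ℕ) (hq : IsPrimePow q) (hr : 1 < r) (hn : 0 < n)
    (hcop : Nat.Coprime n q)
    (K : Type*) [Field K] [Fintype K] (hK : Fintype.card K = q)
    (E : Type*) [Field E] [Fintype E] (hE : Fintype.card E = q ^ (r - 1))
    (F : Type*) [Field F] [Fintype F] (hF : Fintype.card F = q ^ r)
    (φ : K →+* F) (χ : K →+* E)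
    (g : Polynomial F) (hmonic : g.Monic) (hGC : GaloisCoprime q r g)
    (g₀ : Polynomial K) (hmonic₀ : g₀.Monic)
    (hdvd : (g₀.map φ) * g ∣ (Polynomial.X ^ n - 1 : Polynomial F))
    (w : ℕ) (hw : w ≤ n) :
    {u : Fin n → F | (g₀.map φ) * g ∣ wordPoly u ∧ fqWeight q u = w}.ncard =
      q ^ (n - r * g.natDegree - g₀.natDegree) *
        {v : Fin n → E | g₀.map χ ∣ wordPoly v ∧ hammingWt v = n - w}.ncard :=
  stmt5_general q r n hcop K hK E hE F hF φ χ g hmonic hGC g₀ hmonic₀ hdvd w hw
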